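/- Suppose that for each i ∈ {1,2} there is at most one j ∈ {1,…,n} with q_{ij} ≠ 0. Let t be a nonempty n-colored rooted tree in which every vertex has at most one incoming edge of each color. Then every subforest s of t with q(s,t) ≠ 0 has the property that both s and its complement s^c are connected (each is either empty or a single rooted tree), and each of them is again a tree in which every vertex has at most one incoming edge of each color (with the induced subforest coloring). Consequently the coproduct Δ(t) = Σ_{s ⊆ t} q(s,t) · s ⊗ s^c restricts to the subspace of C_n spanned by 1 and by single rooted trees with at most one incoming edge of each color at each vertex. -/

import Mathlib

/- STATEMENT 10: if each row of parameters has at most one nonzero entry,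
then in a tree with at most one incoming edge of each color at each
vertex, any subforest with nonzero coefficient and its complement are
connected and again have at most one incoming edge of each color;
consequently Δ restricts to the span of 1 and such trees. -/



/- Core combinatorics of n-edge-colored rooted forests.

A forest is encoded by a finite set of vertices (natural numbers), a
parent function (pointing one step towards the root) and a coloring
function assigning to each non-root vertex the color of the edge
connecting it to its parent.  Well-formedness (`WF`) asks that the parent
function is supported on the vertex set and is acyclic. -/

open scoped Classical

noncomputable section

structure PForest (n : ℕ) where
  verts : Finset ℕ
  parent : ℕ → Option ℕ
  color : ℕ → Fin n

namespace PForest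

variable {n : ℕ}

/-- well-formedness: edges join vertices, and the parent relation is
acyclic. -/
def WF (t : PForest n) : Prop :=
  (∀ v w : ℕ, t.parent v = some w → v ∈ t.verts ∧ w ∈ t.verts) ∧
    ∃ rk : ℕ → ℕ, ∀ v w : ℕ, t.parent v = some w → rk w < rk v

/-- one step towards the root: `w` is the parent of `v`. -/
def Step (t : PForest n) (v w : ℕ) : Prop := t.parent v = some w

/-- `w` lies (weakly) on the path from `v` to the root of its component. -/
def Anc (t : PForest n) (v w : ℕ) : Prop := Relation.ReflTransGen t.Step v w

def nearestAncAux (t : PForest n) (S : Finset ℕ) : ℕ → ℕ → Option ℕ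
  | 0, _ => none
  | fuel + 1, v =>
    match t.parent v with
    | none => none
    | some w => if w ∈ S then some w else nearestAncAux t S fuel w

/-- the first vertex of `S` strictly below `v`; this is the parent of `v`
in the subforest induced on `S`. -/
def nearestAnc (t : PForest n) (S : Finset ℕ) (v : ℕ) : Option ℕ :=
  nearestAncAux t S t.verts.card v

def lastBeforeAux (t : PForest n) (S : Finset ℕ) : ℕ → ℕ → ℕ
  | 0, v => v
  | fuel + 1, v =>
    match t.parent v with
    | none => v
    | some w => if w ∈ S then v else lastBeforeAux t S fuel w

/-- the last vertex on the path from `v` down to `nearestAnc t S v`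
before reaching it; the color of the edge of the induced subforest below
`v` is the (ambient) color of this vertex. -/
def lastBefore (t : PForest n) (S : Finset ℕ) (v : ℕ) : ℕ :=
  lastBeforeAux t S t.verts.card v

/-- `pcount t S s j v` is the number of edges of (induced) color `j` on
the path from `v` to the root of its component in the subforest of `t`
induced on `S`, whose lower vertex lies outside `s`.  (Edges of the
induced subforest are indexed by their upper vertex `x`; the lower vertex
is `nearestAnc t S x` and the induced color is the ambient color of
`lastBefore t S x`.) -/
def pcount (t : PForest n) (S s : Finset ℕ) (j : Fin n) (v : ℕ) : ℕ :=
  (S.filter fun x => t.Anc v x ∧ t.color (t.lastBefore S x) = j ∧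
      ∃ w, t.nearestAnc S x = some w ∧ w ∉ s).card

/-- the subforest of `u` induced on `S`, as a forest in its own right. -/
def restrict (u : PForest n) (S : Finset ℕ) : PForest n where
  verts := S ∩ u.verts
  parent := fun v => if v ∈ S ∩ u.verts then u.nearestAnc S v else none
  color := fun v => u.color (u.lastBefore S v)

/-- a forest is a (nonempty) tree when it has exactly one root. -/
def IsTree (t : PForest n) : Prop :=
  (t.verts.filter fun v => t.parent v = none).card = 1

/-- `e` is an isomorphism of n-colored forests from `s` to `t`: a
bijection of the vertices preserving the parent relation and the colors
of edges. -/
def IsIsoFn (s t : PForest n) (e : {x // x ∈ s.verts} ≃ {x // x ∈ t.verts}) : Prop :=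
  (∀ v w : {x // x ∈ s.verts},
      s.parent (v : ℕ) = some (w : ℕ) ↔ t.parent ((e v : ℕ)) = some ((e w : ℕ))) ∧
    ∀ v : {x // x ∈ s.verts}, (s.parent (v : ℕ)).isSome →
      t.color ((e v : ℕ)) = s.color (v : ℕ)

/-- isomorphism of n-colored forests. -/
def PIso (s t : PForest n) : Prop := ∃ e, IsIsoFn s t e

end PForest

/-- a (well-formed, nonempty) n-colored rooted tree. -/
def TreeObj (n : ℕ) : Type := {t : PForest n // t.WF ∧ t.IsTree}

/-- isomorphism classes of n-colored rooted trees. -/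
def TreeClass (n : ℕ) : Type := Quot fun a b : TreeObj n => PForest.PIso a.1 b.1

/-- the one-vertex tree. -/
def unitTree (n : ℕ) [NeZero n] : PForest n :=
  ⟨{0}, fun _ => none, fun _ => 0⟩

theorem unitTree_wf (n : ℕ) [NeZero n] : (unitTree n).WF :=
  ⟨fun v w h => by simp [unitTree] at h, ⟨id, fun v w h => by simp [unitTree] at h⟩⟩

theorem unitTree_isTree (n : ℕ) [NeZero n] : (unitTree n).IsTree := by
  simp [PForest.IsTree, unitTree]

def defaultTreeObj (n : ℕ) [NeZero n] : TreeObj n :=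
  ⟨unitTree n, unitTree_wf n, unitTree_isTree n⟩

/-- the isomorphism class of a tree (junk value: the class of the
one-vertex tree, if the given forest is not a well-formed tree). -/
def mkClass {n : ℕ} [NeZero n] (t : PForest n) : TreeClass n :=
  if h : t.WF ∧ t.IsTree then Quot.mk _ (⟨t, h⟩ : TreeObj n)
  else Quot.mk _ (defaultTreeObj n)

end

noncomputable section

open PForest TensorProduct

variable (K : Type*) [Field K] {n : ℕ}

namespace PForest

/-- the component of the subforest induced on `S` rooted at `r`: the set
of `x ∈ S` whose path to the root passes through `r`. -/
def compSet (u : PForest n) (S : Finset ℕ) (r : ℕ) : Finset ℕ :=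
  S.filter fun x => u.Anc x r

/-- the roots of the subforest induced on `S`: the elements of `S` with
no further element of `S` strictly below them. -/
def sroots (u : PForest n) (S : Finset ℕ) : Finset ℕ :=
  S.filter fun r => ∀ w ∈ S, u.Anc r w → w = r

end PForest

/-- `C_n`: the polynomial algebra on the isomorphism classes of
n-colored rooted trees; its monomial basis is given by the (isomorphism
classes of) n-colored forests. -/
abbrev Cn (K : Type*) [Field K] (n : ℕ) : Type _ := MvPolynomial (TreeClass n) K

/-- the basis monomial of `C_n` corresponding to the subforest of `u`
induced on `S`: the product of the classes of its components. -/
def forestMonomial [NeZero n] (u : PForest n) (S : Finset ℕ) : Cn K n :=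
  ∏ r ∈ PForest.sroots u S, MvPolynomial.X (mkClass (u.restrict (PForest.compSet u S r)))

/-- the coefficient `q(s,T)` (for `s` a subforest of the subforest of `u`
induced on `T`), for parameters `q1 j = q_{1j}`, `q2 j = q_{2j}`:
`q(s,T) = ∏_j q_{1j}^{Σ_{v∈s} p_j(v,s,T)} · ∏_j q_{2j}^{Σ_{v∈T∖s} p_j(v,T∖s,T)}`. -/
def qcoef (q1 q2 : Fin n → K) (u : PForest n) (T s : Finset ℕ) : K :=
  (∏ j : Fin n, q1 j ^ ∑ v ∈ s, u.pcount T s j v) *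
    ∏ j : Fin n, q2 j ^ ∑ v ∈ T \ s, u.pcount T (T \ s) j v

/-- `Δ(t) = Σ_{s ⊆ t} q(s,t) · s ⊗ s^c`, for a concrete forest `u`. -/
def subforestSum [NeZero n] (q1 q2 : Fin n → K) (u : PForest n) :
    Cn K n ⊗[K] Cn K n :=
  ∑ S ∈ u.verts.powerset,
    qcoef K q1 q2 u u.verts S •
      (forestMonomial K u S ⊗ₜ[K] forestMonomial K u (u.verts \ S))

/-- the comultiplication of `C_n`, as the algebra map determined by the
subforest formula on (representatives of) tree classes. -/
def DeltaC [NeZero n] (q1 q2 : Fin n → K) :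
    Cn K n →ₐ[K] Cn K n ⊗[K] Cn K n :=
  MvPolynomial.aeval fun T => subforestSum K q1 q2 (Quot.out T).1

/-- the counit of `C_n`: the algebra map vanishing on every tree. -/
def epsC [NeZero n] : Cn K n →ₐ[K] K :=
  MvPolynomial.aeval fun _ : TreeClass n => (0 : K)

end

namespace PForest

/-- every vertex has at most one incoming edge of each color. -/
def Slim {n : ℕ} (t : PForest n) : Prop :=
  ∀ v ∈ t.verts, ∀ j : Fin n,
    (t.verts.filter fun x => t.parent x = some v ∧ t.color x = j).card ≤ 1

/-- the number of connected components of the subforest of u induced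
on S (counted by their roots). -/
def rootCount {n : ℕ} (u : PForest n) (S : Finset ℕ) : ℕ :=
  (S.filter fun x => u.nearestAnc S x = none).card

end PForest

/-- the isomorphism class of a slim tree. -/
def IsSlimClass {n : ℕ} (T : TreeClass n) : Prop :=
  ∃ a : TreeObj n, a.1.Slim ∧ Quot.mk _ a = T

/-- the span of 1 and the single rooted trees with at most one incoming
edge of each color at each vertex. -/
noncomputable def slimSpan (K : Type*) [Field K] (n : ℕ) : Submodule K (Cn K n) :=
  Submodule.span K
    ({1} ∪ {p | ∃ T : TreeClass n, IsSlimClass T ∧ p = MvPolynomial.X T})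


/-! If `q(s,t) ≠ 0`, every edge on the path from a vertex of `s` to the root whose lower vertex
lies outside `s` has the unique color `j` with `q_{1j} ≠ 0` (for `s^c` the same holds with
`q_2`). Two roots of `s`, or two children of one vertex of the induced forest `s` with the same
induced color, would give two paths starting in `s` that leave `s` and then meet; at their
meeting point two distinct edges of that color enter, against slimness (when the two children
hang below the same vertex through different edges, those two edges already contradict it).
So both tensor factors of every term of `Δ(t)` are `1` or slim trees; as `Δ` is an algebra map
and slimness is invariant under isomorphism, `Δ` maps the span of `1` and the slim trees into
its tensor square. -/

open Relation

namespace PForest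

variable {n : ℕ} {u : PForest n} {A : Finset ℕ}

section Paths

theorem WF.mem_of_step (hu : u.WF) {v w : ℕ} (h : u.Step v w) : v ∈ u.verts ∧ w ∈ u.verts :=
  hu.1 v w h

theorem step_rightUnique : Relator.RightUnique u.Step :=
  fun _ _ _ h h' => Option.some_inj.mp (h.symm.trans h')

theorem WF.mem_of_transGen (hu : u.WF) {v w : ℕ} (h : TransGen u.Step v w) :
    v ∈ u.verts ∧ w ∈ u.verts := by
  induction h with
  | single h => exact hu.mem_of_step h
  | tail _ h ih => exact ⟨ih.1, (hu.mem_of_step h).2⟩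

theorem WF.mem_of_anc (hu : u.WF) {v w : ℕ} (hv : v ∈ u.verts) (h : u.Anc v w) :
    w ∈ u.verts := by
  rcases reflTransGen_iff_eq_or_transGen.mp h with rfl | h
  exacts [hv, (hu.mem_of_transGen h).2]

theorem WF.exists_rank (hu : u.WF) :
    ∃ rk : ℕ → ℕ, ∀ v w, TransGen u.Step v w → rk w < rk v := by
  obtain ⟨rk, hrk⟩ := hu.2
  refine ⟨rk, fun v w h => ?_⟩
  induction h with
  | single h => exact hrk _ _ h
  | tail _ h ih => exact (hrk _ _ h).trans ih

theorem WF.transGen_irrefl (hu : u.WF) (v : ℕ) : ¬ TransGen u.Step v v := by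
  obtain ⟨rk, hrk⟩ := hu.exists_rank
  exact fun h => lt_irrefl _ (hrk v v h)

theorem WF.induction (hu : u.WF) {P : ℕ → Prop}
    (ih : ∀ v, (∀ w, TransGen u.Step v w → P w) → P v) (v : ℕ) : P v := by
  obtain ⟨rk, hrk⟩ := hu.exists_rank
  exact (InvImage.wf rk wellFounded_lt).induction v fun v h => ih v fun w hw => h w (hrk v w hw)

theorem WF.exists_root (hu : u.WF) (v : ℕ) : ∃ z, u.Anc v z ∧ u.parent z = none := by
  induction v using hu.induction with
  | ih v ih =>
    cases hp : u.parent v with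
    | none => exact ⟨v, .refl, hp⟩
    | some w =>
      obtain ⟨z, hwz, hz⟩ := ih w (.single hp)
      exact ⟨z, .head hp hwz, hz⟩

/-- The number of strict ancestors of `v`; it bounds the fuel that `nearestAnc` and
`lastBefore` consume. -/
noncomputable def hgt (t : PForest n) (v : ℕ) : ℕ :=
  (t.verts.filter fun w => TransGen t.Step v w).card

theorem WF.hgt_lt_of_transGen (hu : u.WF) {v w : ℕ} (h : TransGen u.Step v w) :
    u.hgt w < u.hgt v := by
  refine Finset.card_lt_card ((Finset.ssubset_iff_of_subset fun z hz => ?_).mpr ?_)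
  · simp only [Finset.mem_filter] at hz ⊢
    exact ⟨hz.1, h.trans hz.2⟩
  · exact ⟨w, Finset.mem_filter.mpr ⟨(hu.mem_of_transGen h).2, h⟩,
      fun hw => hu.transGen_irrefl w (Finset.mem_filter.mp hw).2⟩

theorem WF.hgt_lt_card (hu : u.WF) {v : ℕ} (hv : v ∈ u.verts) : u.hgt v < u.verts.card :=
  Finset.card_lt_card ((Finset.ssubset_iff_of_subset (Finset.filter_subset _ _)).mpr
    ⟨v, hv, fun h => hu.transGen_irrefl v (Finset.mem_filter.mp h).2⟩)

end Paths

section InducedParent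

theorem nearestAnc_of_parent_eq_none {v : ℕ} (h : u.parent v = none) :
    u.nearestAnc A v = none := by
  unfold nearestAnc
  cases u.verts.card <;> simp [nearestAncAux, h]

theorem WF.nearestAnc_of_step_mem (hu : u.WF) {v w : ℕ} (h : u.Step v w) (hw : w ∈ A) :
    u.nearestAnc A v = some w := by
  obtain ⟨f, hf⟩ :=
    Nat.exists_eq_add_one_of_ne_zero (Finset.card_ne_zero_of_mem (hu.mem_of_step h).1)
  rw [nearestAnc, hf]
  simp [nearestAncAux, show u.parent v = some w from h, hw]

theorem WF.nearestAncAux_eq_of_hgt_lt (hu : u.WF) :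
    ∀ {f g v : ℕ}, u.hgt v < f → u.hgt v < g → u.nearestAncAux A f v = u.nearestAncAux A g v
  | 0, _, _, hf, _ => absurd hf (Nat.not_lt_zero _)
  | _, 0, _, _, hg => absurd hg (Nat.not_lt_zero _)
  | f + 1, g + 1, v, hf, hg => by
    cases hp : u.parent v with
    | none => simp [nearestAncAux, hp]
    | some w =>
      have hwv := hu.hgt_lt_of_transGen (.single hp)
      by_cases hw : w ∈ A
      · simp [nearestAncAux, hp, hw]
      · simp only [nearestAncAux, hp, hw, ite_false]
        exact hu.nearestAncAux_eq_of_hgt_lt (by omega) (by omega)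

theorem WF.nearestAnc_of_step_not_mem (hu : u.WF) {v w : ℕ} (h : u.Step v w) (hw : w ∉ A) :
    u.nearestAnc A v = u.nearestAnc A w := by
  have hv := hu.hgt_lt_card (hu.mem_of_step h).1
  have hwv := hu.hgt_lt_of_transGen (.single h)
  obtain ⟨f, hf⟩ := Nat.exists_eq_add_one_of_ne_zero (Nat.ne_zero_of_lt hv)
  rw [nearestAnc, nearestAnc, hf]
  conv_lhs => rw [nearestAncAux]
  simp only [show u.parent v = some w from h, hw, ite_false]
  exact hu.nearestAncAux_eq_of_hgt_lt (by omega) (by omega)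

theorem WF.lastBefore_of_step_mem (hu : u.WF) {v w : ℕ} (h : u.Step v w) (hw : w ∈ A) :
    u.lastBefore A v = v := by
  obtain ⟨f, hf⟩ :=
    Nat.exists_eq_add_one_of_ne_zero (Finset.card_ne_zero_of_mem (hu.mem_of_step h).1)
  rw [lastBefore, hf]
  simp [lastBeforeAux, show u.parent v = some w from h, hw]

theorem WF.lastBeforeAux_eq_of_hgt_lt (hu : u.WF) :
    ∀ {f g v : ℕ}, u.hgt v < f → u.hgt v < g → u.lastBeforeAux A f v = u.lastBeforeAux A g v
  | 0, _, _, hf, _ => absurd hf (Nat.not_lt_zero _)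
  | _, 0, _, _, hg => absurd hg (Nat.not_lt_zero _)
  | f + 1, g + 1, v, hf, hg => by
    cases hp : u.parent v with
    | none => simp [lastBeforeAux, hp]
    | some w =>
      have hwv := hu.hgt_lt_of_transGen (.single hp)
      by_cases hw : w ∈ A
      · simp [lastBeforeAux, hp, hw]
      · simp only [lastBeforeAux, hp, hw, ite_false]
        exact hu.lastBeforeAux_eq_of_hgt_lt (by omega) (by omega)

theorem WF.lastBefore_of_step_not_mem (hu : u.WF) {v w : ℕ} (h : u.Step v w) (hw : w ∉ A) :
    u.lastBefore A v = u.lastBefore A w := by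
  have hv := hu.hgt_lt_card (hu.mem_of_step h).1
  have hwv := hu.hgt_lt_of_transGen (.single h)
  obtain ⟨f, hf⟩ := Nat.exists_eq_add_one_of_ne_zero (Nat.ne_zero_of_lt hv)
  rw [lastBefore, lastBefore, hf]
  conv_lhs => rw [lastBeforeAux]
  simp only [show u.parent v = some w from h, hw, ite_false]
  exact hu.lastBeforeAux_eq_of_hgt_lt (by omega) (by omega)

theorem WF.nearestAnc_verts (hu : u.WF) {v w : ℕ} (h : u.Step v w) :
    u.nearestAnc u.verts v = some w :=
  hu.nearestAnc_of_step_mem h (hu.mem_of_step h).2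

theorem WF.lastBefore_verts (hu : u.WF) {v w : ℕ} (h : u.Step v w) :
    u.lastBefore u.verts v = v :=
  hu.lastBefore_of_step_mem h (hu.mem_of_step h).2

theorem WF.transGen_of_nearestAnc_eq_some (hu : u.WF) {v w : ℕ} (h : u.nearestAnc A v = some w) :
    TransGen u.Step v w ∧ w ∈ A := by
  induction v using hu.induction with
  | ih v ih =>
    cases hp : u.parent v with
    | none => simp [nearestAnc_of_parent_eq_none hp] at h
    | some c =>
      by_cases hc : c ∈ A
      · rw [hu.nearestAnc_of_step_mem hp hc, Option.some_inj] at h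
        exact h ▸ ⟨.single hp, hc⟩
      · rw [hu.nearestAnc_of_step_not_mem hp hc] at h
        obtain ⟨hcw, hw⟩ := ih c (.single hp) h
        exact ⟨.head hp hcw, hw⟩

theorem WF.not_mem_of_nearestAnc_eq_none (hu : u.WF) {v z : ℕ} (h : u.nearestAnc A v = none)
    (hvz : TransGen u.Step v z) : z ∉ A := by
  induction hvz using TransGen.head_induction_on with
  | single hp => exact fun hz => by simp [hu.nearestAnc_of_step_mem hp hz] at h
  | @head _ c hp _ ih =>
    by_cases hc : c ∈ A
    · simp [hu.nearestAnc_of_step_mem hp hc] at h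
    · exact ih (hu.nearestAnc_of_step_not_mem hp hc ▸ h)

theorem WF.anc_of_nearestAnc_eq_some (hu : u.WF) {v w z : ℕ} (h : u.nearestAnc A v = some w)
    (hvz : TransGen u.Step v z) (hz : z ∈ A) : u.Anc w z := by
  induction hvz using TransGen.head_induction_on with
  | single hp =>
    rw [hu.nearestAnc_of_step_mem hp hz, Option.some_inj] at h
    exact h ▸ .refl
  | @head _ c hp hcz ih =>
    by_cases hc : c ∈ A
    · rw [hu.nearestAnc_of_step_mem hp hc, Option.some_inj] at h
      exact h ▸ hcz.to_reflTransGen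
    · exact ih (hu.nearestAnc_of_step_not_mem hp hc ▸ h)

theorem WF.exists_anc_nearestAnc_eq_none (hu : u.WF) {v : ℕ} (hv : v ∈ A) :
    ∃ z ∈ A, u.Anc v z ∧ u.nearestAnc A z = none := by
  induction v using hu.induction with
  | ih v ih =>
    cases h : u.nearestAnc A v with
    | none => exact ⟨v, hv, .refl, h⟩
    | some w =>
      obtain ⟨hvw, hw⟩ := hu.transGen_of_nearestAnc_eq_some h
      obtain ⟨z, hz, hwz, hz'⟩ := ih w hvw hw
      exact ⟨z, hz, hvw.to_reflTransGen.trans hwz, hz'⟩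

theorem WF.lastBefore_spec (hu : u.WF) {v w : ℕ} (h : u.nearestAnc A v = some w) :
    u.Anc v (u.lastBefore A v) ∧ u.Step (u.lastBefore A v) w := by
  induction v using hu.induction with
  | ih v ih =>
    cases hp : u.parent v with
    | none => simp [nearestAnc_of_parent_eq_none hp] at h
    | some c =>
      by_cases hc : c ∈ A
      · rw [hu.nearestAnc_of_step_mem hp hc, Option.some_inj] at h
        rw [hu.lastBefore_of_step_mem hp hc]
        exact h ▸ ⟨.refl, hp⟩
      · rw [hu.nearestAnc_of_step_not_mem hp hc] at h
        rw [hu.lastBefore_of_step_not_mem hp hc]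
        obtain ⟨hca, hstep⟩ := ih c (.single hp) h
        exact ⟨.head hp hca, hstep⟩

end InducedParent

section Exits

/-- The upper vertices of the edges counted by `pcount u u.verts A j v` for `v ∈ A`. -/
def exits (u : PForest n) (A : Finset ℕ) : Set ℕ :=
  {x | (∃ v ∈ A, u.Anc v x) ∧ ∃ w, u.Step x w ∧ w ∉ A}

theorem Slim.eq_of_step (hslim : u.Slim) (hu : u.WF) {a b v : ℕ} (ha : u.Step a v)
    (hb : u.Step b v) (hab : u.color a = u.color b) : a = b :=
  Finset.card_le_one.mp (hslim v (hu.mem_of_step ha).2 (u.color a)) a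
    (Finset.mem_filter.mpr ⟨(hu.mem_of_step ha).1, ha, rfl⟩) b
    (Finset.mem_filter.mpr ⟨(hu.mem_of_step hb).1, hb, hab.symm⟩)

theorem WF.exists_merge (hu : u.WF) {x₁ x₂ y : ℕ} (h₁ : u.Anc x₁ y) (h₂ : u.Anc x₂ y)
    (h₁₂ : ¬ u.Anc x₁ x₂) (h₂₁ : ¬ u.Anc x₂ x₁) :
    ∃ z₁ z₂ m, z₁ ≠ z₂ ∧ u.Anc x₁ z₁ ∧ u.Anc x₂ z₂ ∧ u.Step z₁ m ∧ u.Step z₂ m ∧ u.Anc m y := by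
  have hy : TransGen u.Step x₁ y := by
    rcases reflTransGen_iff_eq_or_transGen.mp h₁ with rfl | h
    exacts [absurd h₂ h₂₁, h]
  obtain ⟨m, hmM, hmax⟩ := (u.verts.filter fun m => u.Anc x₁ m ∧ u.Anc x₂ m).exists_max_image
    u.hgt ⟨y, Finset.mem_filter.mpr ⟨(hu.mem_of_transGen hy).2, h₁, h₂⟩⟩
  obtain ⟨-, hm₁, hm₂⟩ := Finset.mem_filter.mp hmM
  -- `m` is the highest common ancestor of `x₁` and `x₂`
  have not_above : ∀ z, u.Anc x₁ z → u.Anc x₂ z → ¬ TransGen u.Step z m := fun z hz₁ hz₂ hzm =>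
    (hu.hgt_lt_of_transGen hzm).not_ge
      (hmax z (Finset.mem_filter.mpr ⟨(hu.mem_of_transGen hzm).1, hz₁, hz₂⟩))
  obtain ⟨z₁, hz₁, hz₁m⟩ := TransGen.tail'_iff.mp
    ((reflTransGen_iff_eq_or_transGen.mp hm₁).resolve_left (by rintro rfl; exact h₂₁ hm₂))
  obtain ⟨z₂, hz₂, hz₂m⟩ := TransGen.tail'_iff.mp
    ((reflTransGen_iff_eq_or_transGen.mp hm₂).resolve_left (by rintro rfl; exact h₁₂ hm₁))
  refine ⟨z₁, z₂, m, fun hz => not_above z₁ hz₁ (hz ▸ hz₂) (.single hz₁m),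
    hz₁, hz₂, hz₁m, hz₂m, ?_⟩
  rcases ReflTransGen.total_of_right_unique step_rightUnique hm₁ h₁ with h | h
  · exact h
  · rcases reflTransGen_iff_eq_or_transGen.mp h with rfl | h
    exacts [.refl, (not_above y h₁ h₂ h).elim]

/-- Two paths that start in `A`, leave it at once and meet enter their meeting point along
two exit edges of the same color, which slimness forbids. -/
theorem WF.eq_of_paths_outside (hu : u.WF) (hslim : u.Slim)
    (hexits : (u.color '' u.exits A).Subsingleton)
    {x₁ x₂ y : ℕ} (hx₁ : x₁ ∈ A) (hx₂ : x₂ ∈ A) (h₁ : u.Anc x₁ y) (h₂ : u.Anc x₂ y)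
    (hout₁ : ∀ m, TransGen u.Step x₁ m → u.Anc m y → m ∉ A)
    (hout₂ : ∀ m, TransGen u.Step x₂ m → u.Anc m y → m ∉ A) : x₁ = x₂ := by
  by_contra hne
  have not_anc : ∀ {a b : ℕ}, a ≠ b → b ∈ A → u.Anc b y →
      (∀ m, TransGen u.Step a m → u.Anc m y → m ∉ A) → ¬ u.Anc a b := fun hab hb hby hout h =>
    ((reflTransGen_iff_eq_or_transGen.mp h).elim (fun h => hab h.symm) fun h => hout _ h hby hb)
  obtain ⟨z₁, z₂, m, hz, hxz₁, hxz₂, hz₁m, hz₂m, hmy⟩ :=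
    hu.exists_merge h₁ h₂ (not_anc hne hx₂ h₂ hout₁) (not_anc (Ne.symm hne) hx₁ h₁ hout₂)
  have hm : m ∉ A := hout₁ m (.tail' hxz₁ hz₁m) hmy
  exact hz (hslim.eq_of_step hu hz₁m hz₂m (hexits ⟨z₁, ⟨⟨x₁, hx₁, hxz₁⟩, m, hz₁m, hm⟩, rfl⟩
    ⟨z₂, ⟨⟨x₂, hx₂, hxz₂⟩, m, hz₂m, hm⟩, rfl⟩))

theorem WF.rootCount_le_one (hu : u.WF) (htree : u.IsTree) (hslim : u.Slim)
    (hA : A ⊆ u.verts) (hexits : (u.color '' u.exits A).Subsingleton) :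
    u.rootCount A ≤ 1 := by
  refine Finset.card_le_one.mpr fun r₁ hr₁ r₂ hr₂ => ?_
  rw [Finset.mem_filter] at hr₁ hr₂
  obtain ⟨p₁, hrp₁, hp₁⟩ := hu.exists_root r₁
  obtain ⟨p₂, hrp₂, hp₂⟩ := hu.exists_root r₂
  obtain rfl : p₁ = p₂ := Finset.card_le_one.mp htree.le
    p₁ (Finset.mem_filter.mpr ⟨hu.mem_of_anc (hA hr₁.1) hrp₁, hp₁⟩)
    p₂ (Finset.mem_filter.mpr ⟨hu.mem_of_anc (hA hr₂.1) hrp₂, hp₂⟩)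
  exact hu.eq_of_paths_outside hslim hexits hr₁.1 hr₂.1 hrp₁ hrp₂
    (fun _ h _ => hu.not_mem_of_nearestAnc_eq_none hr₁.2 h)
    (fun _ h _ => hu.not_mem_of_nearestAnc_eq_none hr₂.2 h)

theorem WF.slim_restrict (hu : u.WF) (hslim : u.Slim)
    (hexits : (u.color '' u.exits A).Subsingleton) :
    (u.restrict A).Slim := by
  intro v _ j
  refine Finset.card_le_one.mpr fun x₁ hx₁ x₂ hx₂ => ?_
  simp only [restrict, Finset.mem_filter, Finset.mem_inter] at hx₁ hx₂
  obtain ⟨hx₁, hp₁, hc₁⟩ := hx₁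
  obtain ⟨hx₂, hp₂, hc₂⟩ := hx₂
  rw [if_pos hx₁] at hp₁
  rw [if_pos hx₂] at hp₂
  obtain ⟨ha₁, hs₁⟩ := hu.lastBefore_spec hp₁
  obtain ⟨ha₂, hs₂⟩ := hu.lastBefore_spec hp₂
  rw [← hslim.eq_of_step hu hs₁ hs₂ (hc₁.trans hc₂.symm)] at ha₂ hs₂
  have hout : ∀ {x y : ℕ}, u.nearestAnc A x = some v → u.Step y v →
      ∀ m, TransGen u.Step x m → u.Anc m y → m ∉ A := fun hx hy m hxm hmy hm =>
    hu.transGen_irrefl v (.trans_right (hu.anc_of_nearestAnc_eq_some hx hxm hm) (.tail' hmy hy))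
  exact hu.eq_of_paths_outside hslim hexits hx₁.1 hx₂.1 ha₁ ha₂ (hout hp₁ hs₁) (hout hp₂ hs₂)

theorem WF.ne_zero_of_mem_exits {M : Type*} [CommMonoidWithZero M] (hu : u.WF) {q : Fin n → M}
    (hq : ∏ j, q j ^ ∑ v ∈ A, u.pcount u.verts A j v ≠ 0) {x : ℕ} (hx : x ∈ u.exits A) :
    q (u.color x) ≠ 0 := by
  obtain ⟨⟨v, hv, hvx⟩, w, hxw, hw⟩ := hx
  have hpos : 0 < u.pcount u.verts A (u.color x) v :=
    Finset.card_pos.mpr ⟨x, Finset.mem_filter.mpr ⟨(hu.mem_of_step hxw).1, hvx,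
      by rw [hu.lastBefore_verts hxw], w, hu.nearestAnc_verts hxw, hw⟩⟩
  intro h0
  refine hq (Finset.prod_eq_zero (Finset.mem_univ (u.color x)) ?_)
  rw [h0, zero_pow (hpos.trans_le (Finset.single_le_sum (fun _ _ => Nat.zero_le _) hv)).ne']

theorem WF.exits_colors_subsingleton {M : Type*} [CommMonoidWithZero M] (hu : u.WF)
    {q : Fin n → M} (hsupp : ∀ j j', q j ≠ 0 → q j' ≠ 0 → j = j')
    (hq : ∏ j, q j ^ ∑ v ∈ A, u.pcount u.verts A j v ≠ 0) :
    (u.color '' u.exits A).Subsingleton := by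
  rintro _ ⟨x, hx, rfl⟩ _ ⟨x', hx', rfl⟩
  exact hsupp _ _ (hu.ne_zero_of_mem_exits hq hx) (hu.ne_zero_of_mem_exits hq hx')

theorem WF.rootCount_le_one_and_slim_of_qcoef_ne_zero {K : Type*} [Field K] (hu : u.WF)
    (htree : u.IsTree) (hslim : u.Slim) {q₁ q₂ : Fin n → K}
    (hsupp₁ : ∀ j j', q₁ j ≠ 0 → q₁ j' ≠ 0 → j = j')
    (hsupp₂ : ∀ j j', q₂ j ≠ 0 → q₂ j' ≠ 0 → j = j')
    {S : Finset ℕ} (hS : S ⊆ u.verts) (hq : qcoef K q₁ q₂ u u.verts S ≠ 0) :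
    u.rootCount S ≤ 1 ∧ u.rootCount (u.verts \ S) ≤ 1 ∧
      (u.restrict S).Slim ∧ (u.restrict (u.verts \ S)).Slim := by
  obtain ⟨hq₁, hq₂⟩ := mul_ne_zero_iff.mp hq
  have hexits₁ := hu.exits_colors_subsingleton hsupp₁ hq₁
  have hexits₂ := hu.exits_colors_subsingleton hsupp₂ hq₂
  exact ⟨hu.rootCount_le_one htree hslim hS hexits₁,
    hu.rootCount_le_one htree hslim Finset.sdiff_subset hexits₂,
    hu.slim_restrict hslim hexits₁, hu.slim_restrict hslim hexits₂⟩

end Exits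

section InducedForest

theorem WF.restrict (hu : u.WF) (A : Finset ℕ) : (u.restrict A).WF := by
  obtain ⟨rk, hrk⟩ := hu.exists_rank
  have key : ∀ v w, (u.restrict A).parent v = some w →
      v ∈ A ∩ u.verts ∧ TransGen u.Step v w ∧ w ∈ A := fun v w h => by
    by_cases hv : v ∈ A ∩ u.verts
    · simp only [PForest.restrict, if_pos hv] at h
      exact ⟨hv, hu.transGen_of_nearestAnc_eq_some h⟩
    · simp only [PForest.restrict, if_neg hv, reduceCtorEq] at h
  refine ⟨fun v w h => ?_, rk, fun v w h => hrk v w (key v w h).2.1⟩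
  obtain ⟨hv, hvw, hw⟩ := key v w h
  exact ⟨hv, Finset.mem_inter.mpr ⟨hw, (hu.mem_of_transGen hvw).2⟩⟩

theorem restrict_isTree_iff (hA : A ⊆ u.verts) : (u.restrict A).IsTree ↔ u.rootCount A = 1 := by
  unfold IsTree rootCount PForest.restrict
  simp only [Finset.inter_eq_left.mpr hA]
  rw [Finset.filter_congr fun x hx => by rw [if_pos hx]]

theorem WF.sroots_eq (hu : u.WF) :
    u.sroots A = A.filter fun x => u.nearestAnc A x = none := by
  refine Finset.filter_congr fun x hx => ⟨fun hmin => ?_, fun h w hw hxw => ?_⟩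
  · cases h : u.nearestAnc A x with
    | none => rfl
    | some w =>
      obtain ⟨hxw, hw⟩ := hu.transGen_of_nearestAnc_eq_some h
      exact absurd (hmin w hw hxw.to_reflTransGen ▸ hxw) (hu.transGen_irrefl x)
  · rcases reflTransGen_iff_eq_or_transGen.mp hxw with rfl | hxw
    exacts [rfl, absurd hw (hu.not_mem_of_nearestAnc_eq_none h hxw)]

theorem WF.compSet_eq (hu : u.WF) {r : ℕ} (hr : (A.filter fun x => u.nearestAnc A x = none) = {r}) :
    u.compSet A r = A := by
  refine Finset.filter_true_of_mem fun x hx => ?_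
  obtain ⟨z, hz, hxz, hz'⟩ := hu.exists_anc_nearestAnc_eq_none hx
  have : z ∈ ({r} : Finset ℕ) := hr ▸ Finset.mem_filter.mpr ⟨hz, hz'⟩
  exact Finset.mem_singleton.mp this ▸ hxz

end InducedForest

section Isomorphism

variable {s t : PForest n}

theorem PIso.symm (ht : t.WF) (h : s.PIso t) : t.PIso s := by
  obtain ⟨e, hpar, hcol⟩ := h
  refine ⟨e.symm, fun v w => by simpa using (hpar (e.symm v) (e.symm w)).symm, fun v hv => ?_⟩
  obtain ⟨w, hw⟩ := Option.isSome_iff_exists.mp hv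
  have hp : s.parent (e.symm v : ℕ) = some (e.symm ⟨w, (ht.1 _ _ hw).2⟩ : ℕ) :=
    (hpar _ _).mpr (by simpa using hw)
  simpa using (hcol (e.symm v) (by rw [hp]; rfl)).symm

theorem Slim.of_piso (h : s.PIso t) (ht : t.Slim) : s.Slim := by
  obtain ⟨e, hpar, hcol⟩ := h
  intro v hv j
  refine le_trans (Finset.card_le_card_of_injOn
    (fun x => if hx : x ∈ s.verts then (e ⟨x, hx⟩ : ℕ) else x) ?_ ?_) (ht _ (e ⟨v, hv⟩).2 j)
  · intro x hx
    obtain ⟨hx, hp, hc⟩ := Finset.mem_filter.mp hx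
    simp only [dif_pos hx]
    refine Finset.mem_filter.mpr ⟨(e ⟨x, hx⟩).2, (hpar ⟨x, hx⟩ ⟨v, hv⟩).mp hp, ?_⟩
    rw [hcol ⟨x, hx⟩ (by simp [hp]), hc]
  · intro x hx y hy hxy
    have hx' := (Finset.mem_filter.mp hx).1
    have hy' := (Finset.mem_filter.mp hy).1
    simp only [dif_pos hx', dif_pos hy'] at hxy
    exact congrArg Subtype.val (e.injective (Subtype.ext hxy))

end Isomorphism

end PForest

theorem IsSlimClass.slim_out {n : ℕ} {T : TreeClass n} (hT : IsSlimClass T) :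
    (Quot.out T).1.Slim := by
  obtain ⟨a, ha, rfl⟩ := hT
  have key : ∀ b c : TreeObj n, Relation.EqvGen (fun a b : TreeObj n => a.1.PIso b.1) b c →
      (b.1.Slim ↔ c.1.Slim) := fun b c h => by
    induction h with
    | rel x y hxy => exact ⟨(·.of_piso (PForest.PIso.symm y.2.1 hxy)), PForest.Slim.of_piso hxy⟩
    | refl x => exact Iff.rfl
    | symm x y _ ih => exact ih.symm
    | trans x y z _ _ ih₁ ih₂ => exact ih₁.trans ih₂
  exact (key _ _ (Quot.eqvGen_exact (Quot.out_eq _).symm)).mp ha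

theorem tmul_mem_range_map_subtype {R M : Type*} [CommSemiring R] [AddCommMonoid M] [Module R M]
    {P : Submodule R M} {a b : M} (ha : a ∈ P) (hb : b ∈ P) :
    a ⊗ₜ[R] b ∈ LinearMap.range (TensorProduct.map P.subtype P.subtype) :=
  ⟨⟨a, ha⟩ ⊗ₜ ⟨b, hb⟩, rfl⟩

section Coproduct

open PForest

variable (K : Type*) [Field K] {n : ℕ} [NeZero n]

theorem forestMonomial_mem_slimSpan {u : PForest n} (hu : u.WF) {A : Finset ℕ}
    (hA : A ⊆ u.verts) (hroot : u.rootCount A ≤ 1) (hslim : (u.restrict A).Slim) :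
    forestMonomial K u A ∈ slimSpan K n := by
  rw [forestMonomial, hu.sroots_eq]
  rcases Nat.le_one_iff_eq_zero_or_eq_one.mp hroot with h0 | h1
  · rw [rootCount, Finset.card_eq_zero] at h0
    rw [h0, Finset.prod_empty]
    exact Submodule.subset_span (Or.inl rfl)
  · obtain ⟨r, hr⟩ := Finset.card_eq_one.mp h1
    have ht : (u.restrict A).WF ∧ (u.restrict A).IsTree :=
      ⟨hu.restrict A, (restrict_isTree_iff hA).mpr h1⟩
    rw [hr, Finset.prod_singleton, hu.compSet_eq hr,
      show mkClass (u.restrict A) = Quot.mk _ (⟨u.restrict A, ht⟩ : TreeObj n) from dif_pos ht]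
    exact Submodule.subset_span (Or.inr ⟨_, ⟨⟨_, ht⟩, hslim, rfl⟩, rfl⟩)

theorem PForest.WF.subforestSum_mem_range {q₁ q₂ : Fin n → K}
    (hsupp₁ : ∀ j j', q₁ j ≠ 0 → q₁ j' ≠ 0 → j = j')
    (hsupp₂ : ∀ j j', q₂ j ≠ 0 → q₂ j' ≠ 0 → j = j')
    {u : PForest n} (hu : u.WF) (htree : u.IsTree) (hslim : u.Slim) :
    subforestSum K q₁ q₂ u ∈
      LinearMap.range (TensorProduct.map (slimSpan K n).subtype (slimSpan K n).subtype) := by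
  refine Submodule.sum_mem _ fun S hS => ?_
  by_cases hq : qcoef K q₁ q₂ u u.verts S = 0
  · simp [hq]
  obtain ⟨hr₁, hr₂, hs₁, hs₂⟩ := hu.rootCount_le_one_and_slim_of_qcoef_ne_zero htree hslim
    hsupp₁ hsupp₂ (Finset.mem_powerset.mp hS) hq
  exact Submodule.smul_mem _ _ (tmul_mem_range_map_subtype
    (forestMonomial_mem_slimSpan K hu (Finset.mem_powerset.mp hS) hr₁ hs₁)
    (forestMonomial_mem_slimSpan K hu Finset.sdiff_subset hr₂ hs₂))

theorem DeltaC_mem_range_of_mem_slimSpan {q₁ q₂ : Fin n → K}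
    (hsupp₁ : ∀ j j', q₁ j ≠ 0 → q₁ j' ≠ 0 → j = j')
    (hsupp₂ : ∀ j j', q₂ j ≠ 0 → q₂ j' ≠ 0 → j = j') {x : Cn K n} (hx : x ∈ slimSpan K n) :
    DeltaC K q₁ q₂ x ∈
      LinearMap.range (TensorProduct.map (slimSpan K n).subtype (slimSpan K n).subtype) := by
  have hone : (1 : Cn K n) ∈ slimSpan K n := Submodule.subset_span (Or.inl rfl)
  suffices slimSpan K n ≤ (LinearMap.range _).comap (DeltaC K q₁ q₂).toLinearMap from this hx
  refine Submodule.span_le.mpr ?_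
  rintro p (rfl | ⟨T, hT, rfl⟩) <;>
    simp only [SetLike.mem_coe, Submodule.mem_comap, AlgHom.toLinearMap_apply]
  · rw [map_one, Algebra.TensorProduct.one_def]
    exact tmul_mem_range_map_subtype hone hone
  · rw [DeltaC, MvPolynomial.aeval_X]
    exact (Quot.out T).2.1.subforestSum_mem_range K hsupp₁ hsupp₂
      (Quot.out T).2.2 hT.slim_out

end Coproduct

theorem slim_trees_preserved (K : Type*) [Field K] (n : ℕ) [NeZero n]
    (q1 q2 : Fin n → K)
    (h1 : ∀ j j' : Fin n, q1 j ≠ 0 → q1 j' ≠ 0 → j = j')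
    (h2 : ∀ j j' : Fin n, q2 j ≠ 0 → q2 j' ≠ 0 → j = j')
    (u : PForest n) (hu : u.WF) (htree : u.IsTree) (hslim : u.Slim) :
    -- every subforest with nonzero coefficient, and its complement, are
    -- connected and slim
    (∀ S ⊆ u.verts, qcoef K q1 q2 u u.verts S ≠ 0 →
      u.rootCount S ≤ 1 ∧ u.rootCount (u.verts \ S) ≤ 1 ∧
        (u.restrict S).Slim ∧ (u.restrict (u.verts \ S)).Slim) ∧
    -- consequently Δ restricts to the span of 1 and the slim trees
    (∀ x ∈ slimSpan K n, DeltaC K q1 q2 x ∈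
        LinearMap.range
          (TensorProduct.map (slimSpan K n).subtype (slimSpan K n).subtype)) :=
  ⟨fun _ hS hq => hu.rootCount_le_one_and_slim_of_qcoef_ne_zero htree hslim h1 h2 hS hq,
    fun _ hx => DeltaC_mem_range_of_mem_slimSpan K h1 h2 hx⟩
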